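/- Let T be a d-dimensional triangulation of positive size. If the dual graph D(T) admits a tree decomposition of width w, then the coloured Hasse diagram H(T) admits a tree decomposition of width at most (2^{d+1}−1)·(w+1). Specifically, given a tree decomposition (T′, {B_τ}) of D(T), setting B′_τ to consist of the node ∅ together with all nodes of H(T) representing the simplices in B_τ and all of their faces of all dimensions yields a tree decomposition (T′, {B′_τ}) of H(T) with |B′_τ| ≤ (2^{d+1}−1)·|B_τ| + 1 for every τ. -/

import Mathlib

/-- A `d`-dimensional triangulation: `n` abstract `d`-simplices (with vertices
labelled `0, …, d`), some or all of whose facets are affinely identified in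
pairs.  The facet `(s, a)` of the simplex `s` is the one opposite vertex `a`;
a gluing of facet `(s, a)` to facet `(q.1, q.2)` is recorded by a permutation
`σ` of the vertex labels with `σ a = q.2`, whose restriction away from `a`
describes the chosen bijection of the vertex sets of the two facets. -/
structure Triangulation (d : ℕ) where
  n : ℕ
  glue : Fin n × Fin (d + 1) → Option ((Fin n × Fin (d + 1)) × Equiv.Perm (Fin (d + 1)))
  glue_ne : ∀ {p q σ}, glue p = some (q, σ) → q ≠ p
  glue_symm : ∀ {p q σ}, glue p = some (q, σ) → glue q = some (p, σ⁻¹)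
  glue_vertex : ∀ {p q σ}, glue p = some (q, σ) → σ p.2 = q.2

namespace Triangulation

variable {d : ℕ}

/-- An ordered appearance of an `i`-face inside a simplex: a simplex together
with the injection sending the vertex labels `0, …, i` of the face to vertex
labels of the simplex. -/
def App (T : Triangulation d) (i : ℕ) : Type :=
  Fin T.n × (Fin (i + 1) ↪ Fin (d + 1))

/-- Two ordered appearances of `i`-faces are directly identified when a facet
gluing carries one to the other. -/
def appStep (T : Triangulation d) (i : ℕ) : T.App i → T.App i → Prop := fun x y =>
  ∃ (a : Fin (d + 1)) (q : Fin T.n × Fin (d + 1)) (σ : Equiv.Perm (Fin (d + 1))),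
    T.glue (x.1, a) = some (q, σ) ∧ (∀ j, x.2 j ≠ a) ∧
    y.1 = q.1 ∧ y.2 = x.2.trans σ.toEmbedding

/-- Ordered `i`-faces of the triangulation: equivalence classes of ordered
appearances under the identifications induced by the facet gluings. -/
def OFace (T : Triangulation d) (i : ℕ) : Type := Quot (T.appStep i)

/-- Reordering the vertex labels of an ordered face by a permutation. -/
def reorder (T : Triangulation d) (i : ℕ) : T.OFace i → T.OFace i → Prop := fun f g =>
  ∃ (x : T.App i) (ρ : Equiv.Perm (Fin (i + 1))),
    f = Quot.mk _ x ∧ g = Quot.mk _ (x.1, ρ.toEmbedding.trans x.2)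

/-- The `i`-faces of the triangulation: ordered `i`-faces up to reordering of
their vertex labels.  (For `i = d` these are just the simplices.) -/
def Face (T : Triangulation d) (i : ℕ) : Type := Quot (T.reorder i)

/-- The unordered face underlying an ordered face. -/
def toFace (T : Triangulation d) {i : ℕ} (f : T.OFace i) : T.Face i :=
  Quot.mk _ f

/-- A labelling of the triangulation: an arbitrary choice, for every `i`-face,
of a labelling of its vertices by `0, …, i`, i.e. of a compatible ordered
face. -/
structure Labelling (T : Triangulation d) where
  lab : ∀ i : ℕ, T.Face i → T.OFace i
  lab_spec : ∀ (i : ℕ) (f : T.Face i), T.toFace (lab i f) = f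

/-- The face `f` appears as a subface of the simplex `s`. -/
def FaceIn (T : Triangulation d) {i : ℕ} (f : T.Face i) (s : Fin T.n) : Prop :=
  ∃ φ : Fin (i + 1) ↪ Fin (d + 1), T.toFace (Quot.mk (T.appStep i) (s, φ)) = f

/-- The subface relation `f ≤_{π_0…π_i} g` between an `i`-face `f` and an
`(i+1)`-face `g` of the triangulation, relative to the labelling `L`:
vertex `j` of `f` corresponds to vertex `π j` of `g`. -/
def SubRel (T : Triangulation d) (L : T.Labelling) {i : ℕ}
    (π : Fin (i + 1) ↪ Fin (i + 2)) (f : T.Face i) (g : T.Face (i + 1)) : Prop :=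
  ∃ (s : Fin T.n) (ψ : Fin (i + 2) ↪ Fin (d + 1)),
    L.lab (i + 1) g = Quot.mk (T.appStep (i + 1)) (s, ψ) ∧
    L.lab i f = Quot.mk (T.appStep i) (s, π.trans ψ)

/-- The subface relation `f ≤_{π_0…π_i} s` between an `i`-face `f` and a
`d`-face (simplex) `s`, where `π_0, …, π_i` are vertex labels of the simplex
itself. -/
def SubSimpRel (T : Triangulation d) (L : T.Labelling) {i : ℕ}
    (π : Fin (i + 1) ↪ Fin (d + 1)) (f : T.Face i) (s : T.Face d) : Prop :=
  ∃ sx : Fin T.n,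
    (∃ ψ : Fin (d + 1) ↪ Fin (d + 1), L.lab d s = Quot.mk (T.appStep d) (sx, ψ)) ∧
    L.lab i f = Quot.mk (T.appStep i) (sx, π)

/-- Adjacency in the dual graph `D(T)`: some facet of `s` is glued to some
facet of `s'` (this includes loops, when `s = s'`). -/
def dualAdj (T : Triangulation d) (s s' : Fin T.n) : Prop :=
  ∃ (a b : Fin (d + 1)) (σ : Equiv.Perm (Fin (d + 1))),
    T.glue (s, a) = some ((s', b), σ)

/-- The degree of a node of the dual graph `D(T)`: the number of glued facets
of the simplex `s`, so that a loop contributes two to the degree. -/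
def dualDegree (T : Triangulation d) (s : Fin T.n) : ℕ :=
  (Finset.univ.filter fun a : Fin (d + 1) => (T.glue (s, a)).isSome).card

/-- Nodes of the coloured Hasse diagram `H(T)`: all faces of all dimensions,
together with the extra node `∅`. -/
def HNode (T : Triangulation d) : Type := (Σ i : ℕ, T.Face i) ⊕ Unit

/-- Colours of the coloured Hasse diagram: the empty colour `−` together
with, for each level `i = 0, …, d−1`, all ordered sequences `π_0…π_i` of
distinct integers from `{0, …, i+1}`. -/
def HColour (d : ℕ) : Type :=
  Option (Σ i : Fin d, Fin ((i : ℕ) + 1) ↪ Fin ((i : ℕ) + 2))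

/-- The (oriented) arc relation of the coloured Hasse diagram `H(T)`: an arc
of colour `π_0…π_i` from an `i`-face `f` to an `(i+1)`-face `g` whenever
`f ≤_{π_0…π_i} g`, and an arc of the empty colour from each vertex (0-face)
to `∅`. -/
def hArcRel (T : Triangulation d) (L : T.Labelling) :
    HColour d → T.HNode → T.HNode → Prop
  | none, x, y => ∃ v : T.Face 0, x = Sum.inl ⟨0, v⟩ ∧ y = Sum.inr ()
  | some ⟨i, π⟩, x, y => ∃ (f : T.Face i) (g : T.Face ((i : ℕ) + 1)),
      T.SubRel L π f g ∧ x = Sum.inl ⟨(i : ℕ), f⟩ ∧ y = Sum.inl ⟨(i : ℕ) + 1, g⟩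

/-- The arcs of the coloured Hasse diagram `H(T)`: a colour together with an
unordered pair of endpoints in the arc relation. -/
def HasseArc (T : Triangulation d) (L : T.Labelling) : Type :=
  {a : HColour d × Sym2 T.HNode // ∃ x y : T.HNode, a.2 = s(x, y) ∧ T.hArcRel L a.1 x y}

/-- The (uncoloured) adjacency relation of the coloured Hasse diagram. -/
def hasseAdj (T : Triangulation d) (L : T.Labelling) (x y : T.HNode) : Prop :=
  ∃ c : HColour d, T.hArcRel L c x y ∨ T.hArcRel L c y x

end Triangulation

/-- A tree decomposition of a graph, presented by its node type `V` and an
adjacency relation `Adj` (this covers simple graphs, multigraphs and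
edge-coloured graphs alike): a finite tree together with finite bags
satisfying the usual covering and connectivity conditions. -/
structure TreeDecomp {V : Type} (Adj : V → V → Prop) where
  /-- index type of the tree nodes -/
  ι : Type
  [fin : Fintype ι]
  tree : SimpleGraph ι
  isTree : tree.IsTree
  bag : ι → Set V
  bag_finite : ∀ t, (bag t).Finite
  covers : ∀ v : V, ∃ t, v ∈ bag t
  covers_adj : ∀ v w : V, Adj v w → ∃ t, v ∈ bag t ∧ w ∈ bag t
  subtree : ∀ v : V, (tree.induce {t | v ∈ bag t}).Connected

/-- The width of a tree decomposition: `max_τ |B_τ| − 1`. -/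
noncomputable def TreeDecomp.width {V : Type} {Adj : V → V → Prop}
    (D : TreeDecomp Adj) : ℕ :=
  letI := D.fin
  (Finset.univ.sup fun t => (D.bag t).ncard) - 1

/-- The treewidth of a graph: the minimum width of a tree decomposition. -/
noncomputable def treewidth {V : Type} (Adj : V → V → Prop) : ℕ :=
  sInf {w | ∃ D : TreeDecomp Adj, D.width = w}

/-- The node `x` of the coloured Hasse diagram represents a face of the
simplex `s` (of any dimension; for dimension `d` this is the simplex itself). -/
def Triangulation.HNodeIn {d : ℕ} (T : Triangulation d) :
    T.HNode → Fin T.n → Prop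
  | Sum.inl f, s => T.FaceIn f.2 s
  | Sum.inr _, _ => False

/-- The bag `B'_τ` built from the bag `B_τ` of a tree decomposition of the
dual graph: the node `∅` together with all nodes of `H(T)` representing the
simplices of `B_τ` and all of their faces of all dimensions. -/
def hasseBag {d : ℕ} (T : Triangulation d) (D : TreeDecomp T.dualAdj)
    (τ : D.ι) : Set T.HNode :=
  {(Sum.inr () : T.HNode)} ∪ {x | ∃ s ∈ D.bag τ, T.HNodeIn x s}

/-!
The simplices containing a fixed face `f` form a connected subgraph of the dual graph: each
facet gluing that identifies two appearances of `f` joins two simplices both containing `f`.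
For a tree decomposition of the dual graph, the tree nodes whose bags meet a connected set of
simplices form a subtree, so taking all faces of the simplices in each bag gives a tree
decomposition of `H(T)`; the node `∅` lies in every bag. A simplex has `2^(d+1) − 1` nonempty
vertex sets, and every face contained in it is spanned by one of them, whence the bag sizes.
-/

theorem SimpleGraph.reachable_induce_fromRel_of_rel {V : Type*} {r : V → V → Prop} {S : Set V}
    {a b : S} (h : r a b) : ((SimpleGraph.fromRel r).induce S).Reachable a b := by
  by_cases hab : a = b
  · exact hab ▸ .refl _
  · exact SimpleGraph.Adj.reachable
      ((SimpleGraph.fromRel_adj r _ _).2 ⟨fun h' => hab (Subtype.ext h'), .inl h⟩)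

theorem Function.Embedding.exists_perm_trans_eq_of_range_eq {ι α : Type*} {φ ψ : ι ↪ α}
    (h : Set.range φ = Set.range ψ) : ∃ ρ : Equiv.Perm ι, ρ.toEmbedding.trans φ = ψ := by
  refine ⟨(Equiv.ofInjective ψ ψ.injective).trans
    ((Equiv.setCongr h.symm).trans (Equiv.ofInjective φ φ.injective).symm), ?_⟩
  ext j
  exact Equiv.apply_ofInjective_symm φ.injective _

theorem Finset.ncard_setOf_nonempty {α : Type*} [Fintype α] :
    {A : Finset α | A.Nonempty}.ncard = 2 ^ Fintype.card α - 1 := by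
  have : {A : Finset α | A.Nonempty} = Set.univ \ {∅} := by
    ext A
    simp [Finset.nonempty_iff_ne_empty]
  rw [this, Set.ncard_sdiff (Set.subset_univ _), Set.ncard_univ, Set.ncard_singleton,
    Nat.card_eq_fintype_card, Fintype.card_finset]

namespace TreeDecomp

variable {V : Type} {Adj : V → V → Prop} (D : TreeDecomp Adj)

theorem ncard_bag_le_width_add_one (τ : D.ι) : (D.bag τ).ncard ≤ D.width + 1 := by
  let _ := D.fin
  have := Finset.le_sup (f := fun t => (D.bag t).ncard) (Finset.mem_univ τ)
  unfold width
  omega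

theorem width_le_of_ncard_bag_le {m : ℕ} (h : ∀ τ, (D.bag τ).ncard ≤ m + 1) : D.width ≤ m := by
  let _ := D.fin
  have := Finset.sup_le (s := Finset.univ) (f := fun t => (D.bag t).ncard) fun τ _ => h τ
  unfold width
  omega

theorem preconnected_induce_bags_of_preconnected {S : Set V}
    (hS : ((SimpleGraph.fromRel Adj).induce S).Preconnected) :
    (D.tree.induce {τ : D.ι | ∃ v ∈ D.bag τ, v ∈ S}).Preconnected := by
  set B : Set D.ι := {τ | ∃ v ∈ D.bag τ, v ∈ S}
  have hbag : ∀ (v : V) (hv : v ∈ S) {τ τ' : D.ι} (h : v ∈ D.bag τ) (h' : v ∈ D.bag τ'),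
      (D.tree.induce B).Reachable ⟨τ, v, h, hv⟩ ⟨τ', v, h', hv⟩ :=
    fun v hv τ τ' h h' => ((D.subtree v).preconnected ⟨τ, h⟩ ⟨τ', h'⟩).map
      (D.tree.induceHomOfLE (s' := B) fun _ h => ⟨v, h, hv⟩).toHom
  rintro ⟨τ, a, ha, haS⟩ ⟨τ', b, hb, hbS⟩
  suffices ∀ c : S, Relation.ReflTransGen ((SimpleGraph.fromRel Adj).induce S).Adj ⟨a, haS⟩ c →
      ∀ τ' (hc : c.1 ∈ D.bag τ'), (D.tree.induce B).Reachable ⟨τ, a, ha, haS⟩ ⟨τ', c, hc, c.2⟩ from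
    this ⟨b, hbS⟩ ((SimpleGraph.reachable_iff_reflTransGen _ _).1 (hS _ _)) τ' hb
  intro c hc
  induction hc with
  | refl => exact fun τ' => hbag a haS ha
  | @tail m e _ hme ih =>
    intro τ' he
    obtain ⟨τm, hmτ, heτ⟩ : ∃ τm, m.1 ∈ D.bag τm ∧ e.1 ∈ D.bag τm := by
      obtain ⟨-, hme | hem⟩ := hme
      · exact D.covers_adj _ _ hme
      · obtain ⟨τm, heτ, hmτ⟩ := D.covers_adj _ _ hem
        exact ⟨τm, hmτ, heτ⟩
    exact (ih τm hmτ).trans (hbag e e.2 heτ he)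

end TreeDecomp

namespace Triangulation

variable {d : ℕ} {T : Triangulation d}

theorem appStep_dualAdj {i : ℕ} {x y : T.App i} (h : T.appStep i x y) : T.dualAdj x.1 y.1 := by
  obtain ⟨a, q, σ, hglue, -, hy, -⟩ := h
  exact ⟨a, q.2, σ, hy ▸ hglue⟩

theorem exists_faceIn {i : ℕ} (f : T.Face i) : ∃ s, T.FaceIn f s := by
  obtain ⟨o, rfl⟩ := Quot.exists_rep f
  obtain ⟨x, rfl⟩ := Quot.exists_rep o
  exact ⟨x.1, x.2, rfl⟩

theorem Labelling.faceIn_of_lab_eq (L : T.Labelling) {i : ℕ} {f : T.Face i} {x : T.App i}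
    (h : L.lab i f = Quot.mk _ x) : T.FaceIn f x.1 :=
  ⟨x.2, h ▸ L.lab_spec i f⟩

theorem preconnected_induce_faceIn {i : ℕ} (f : T.Face i) :
    ((SimpleGraph.fromRel T.dualAdj).induce {s | T.FaceIn f s}).Preconnected := by
  rintro ⟨s₀, φ₀, h₀⟩ ⟨s, φ, h⟩
  -- Reachability from `s₀` is invariant under both identifications defining faces,
  -- so it descends to a predicate on `T.Face i`.
  let P : T.App i → Prop := fun x => ∀ hx : T.toFace (Quot.mk _ x) = f,
    ((SimpleGraph.fromRel T.dualAdj).induce {s | T.FaceIn f s}).Reachable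
      ⟨s₀, φ₀, h₀⟩ ⟨x.1, x.2, hx⟩
  have hstep : ∀ x y, T.appStep i x y → P x = P y := by
    intro x y hxy
    have hface : T.toFace (Quot.mk _ x) = T.toFace (Quot.mk _ y) :=
      congrArg T.toFace (Quot.sound hxy)
    refine propext ⟨fun H hy => ?_, fun H hx => ?_⟩
    · exact (H (hface.trans hy)).trans
        (SimpleGraph.reachable_induce_fromRel_of_rel (appStep_dualAdj hxy))
    · exact (H (hface.symm.trans hx)).trans
        (SimpleGraph.reachable_induce_fromRel_of_rel (appStep_dualAdj hxy)).symm
  have hreorder : ∀ o o', T.reorder i o o' → Quot.lift P hstep o = Quot.lift P hstep o' := by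
    rintro _ _ ⟨x, ρ, rfl, rfl⟩
    have hface : T.toFace (Quot.mk _ x) = T.toFace (Quot.mk _ (x.1, ρ.toEmbedding.trans x.2)) :=
      Quot.sound ⟨x, ρ, rfl, rfl⟩
    exact propext ⟨fun H hx => H (hface.trans hx), fun H hx => H (hface.symm.trans hx)⟩
  have hP : P (s, φ) :=
    (congrArg (Quot.lift (Quot.lift P hstep) hreorder) (h.trans h₀.symm)).mpr fun _ => .refl _
  exact hP h

theorem inl_toFace_eq_of_map_eq (s : Fin T.n) {i j : ℕ} {φ : Fin (i + 1) ↪ Fin (d + 1)}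
    {ψ : Fin (j + 1) ↪ Fin (d + 1)} (h : Finset.univ.map ψ = Finset.univ.map φ) :
    (Sum.inl ⟨j, T.toFace (Quot.mk _ (s, ψ))⟩ : T.HNode) =
      Sum.inl ⟨i, T.toFace (Quot.mk _ (s, φ))⟩ := by
  obtain rfl : j = i := by simpa using congrArg Finset.card h
  have hrange : Set.range φ = Set.range ψ := by
    simpa [Set.image_univ] using congrArg (fun A : Finset _ => (A : Set (Fin (d + 1)))) h.symm
  obtain ⟨ρ, rfl⟩ := Function.Embedding.exists_perm_trans_eq_of_range_eq hrange
  have hface : T.toFace (Quot.mk _ (s, φ)) = T.toFace (Quot.mk _ (s, ρ.toEmbedding.trans φ)) :=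
    Quot.sound ⟨(s, φ), ρ, rfl, rfl⟩
  exact congrArg (fun g : T.Face j => (Sum.inl ⟨j, g⟩ : T.HNode)) hface.symm

open Classical in
/-- The face of `s` spanned by the vertex set `A`; junk value `∅` when `A` is empty. -/
noncomputable def faceNode (T : Triangulation d) (s : Fin T.n) (A : Finset (Fin (d + 1))) :
    T.HNode :=
  if h : ∃ (i : ℕ) (φ : Fin (i + 1) ↪ Fin (d + 1)), Finset.univ.map φ = A then
    Sum.inl ⟨h.choose, T.toFace (Quot.mk _ (s, h.choose_spec.choose))⟩
  else Sum.inr ()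

theorem faceNode_map (s : Fin T.n) {i : ℕ} (φ : Fin (i + 1) ↪ Fin (d + 1)) :
    T.faceNode s (Finset.univ.map φ) = Sum.inl ⟨i, T.toFace (Quot.mk _ (s, φ))⟩ := by
  have hex : ∃ (j : ℕ) (ψ : Fin (j + 1) ↪ Fin (d + 1)), Finset.univ.map ψ = Finset.univ.map φ :=
    ⟨i, φ, rfl⟩
  exact (dif_pos hex).trans (inl_toFace_eq_of_map_eq s hex.choose_spec.choose_spec)

variable (D : TreeDecomp T.dualAdj)

theorem inr_mem_hasseBag (τ : D.ι) : (Sum.inr () : T.HNode) ∈ hasseBag T D τ :=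
  Or.inl rfl

theorem inl_mem_hasseBag_iff {τ : D.ι} {i : ℕ} {f : T.Face i} :
    (Sum.inl ⟨i, f⟩ : T.HNode) ∈ hasseBag T D τ ↔ ∃ s ∈ D.bag τ, T.FaceIn f s := by
  refine ⟨fun h => ?_, Or.inr⟩
  rcases h with h | h
  · exact (Sum.inl_ne_inr h).elim
  · exact h

theorem exists_mem_hasseBag (x : T.HNode) : ∃ τ, x ∈ hasseBag T D τ := by
  obtain ⟨i, f⟩ | ⟨⟩ := x
  · obtain ⟨s, hs⟩ := exists_faceIn f
    obtain ⟨τ, hτ⟩ := D.covers s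
    exact ⟨τ, (inl_mem_hasseBag_iff D).2 ⟨s, hτ, hs⟩⟩
  · obtain ⟨τ⟩ := D.isTree.connected.nonempty
    exact ⟨τ, inr_mem_hasseBag D τ⟩

theorem exists_mem_hasseBag_of_hArcRel (L : T.Labelling) {c : HColour d} {x y : T.HNode}
    (h : T.hArcRel L c x y) : ∃ τ, x ∈ hasseBag T D τ ∧ y ∈ hasseBag T D τ := by
  rcases c with _ | ⟨i, π⟩
  · obtain ⟨v, -, rfl⟩ := h
    obtain ⟨τ, hτ⟩ := exists_mem_hasseBag D x
    exact ⟨τ, hτ, inr_mem_hasseBag D τ⟩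
  · obtain ⟨f, g, ⟨s, ψ, hg, hf⟩, rfl, rfl⟩ := h
    obtain ⟨τ, hτ⟩ := D.covers s
    exact ⟨τ, (inl_mem_hasseBag_iff D).2 ⟨s, hτ, L.faceIn_of_lab_eq hf⟩,
      (inl_mem_hasseBag_iff D).2 ⟨s, hτ, L.faceIn_of_lab_eq hg⟩⟩

theorem exists_mem_hasseBag_of_hasseAdj (L : T.Labelling) {x y : T.HNode}
    (h : T.hasseAdj L x y) : ∃ τ, x ∈ hasseBag T D τ ∧ y ∈ hasseBag T D τ := by
  obtain ⟨c, h | h⟩ := h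
  · exact exists_mem_hasseBag_of_hArcRel D L h
  · obtain ⟨τ, hy, hx⟩ := exists_mem_hasseBag_of_hArcRel D L h
    exact ⟨τ, hx, hy⟩

theorem induce_hasseBag_connected (x : T.HNode) :
    (D.tree.induce {τ | x ∈ hasseBag T D τ}).Connected := by
  match x with
  | .inl ⟨i, f⟩ =>
    obtain ⟨τ, hτ⟩ := exists_mem_hasseBag D (Sum.inl ⟨i, f⟩)
    have hset : {τ | (Sum.inl ⟨i, f⟩ : T.HNode) ∈ hasseBag T D τ} =
        {τ | ∃ s ∈ D.bag τ, s ∈ {s | T.FaceIn f s}} :=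
      Set.ext fun _ => inl_mem_hasseBag_iff D
    change (D.tree.induce {τ | (Sum.inl ⟨i, f⟩ : T.HNode) ∈ hasseBag T D τ}).Connected
    rw [hset]
    exact (SimpleGraph.connected_iff _).2
      ⟨D.preconnected_induce_bags_of_preconnected (preconnected_induce_faceIn f),
        ⟨τ, (inl_mem_hasseBag_iff D).1 hτ⟩⟩
  | .inr () =>
    change (D.tree.induce {τ | (Sum.inr () : T.HNode) ∈ hasseBag T D τ}).Connected
    have hset : {τ | (Sum.inr () : T.HNode) ∈ hasseBag T D τ} = Set.univ :=
      Set.eq_univ_of_forall (inr_mem_hasseBag D)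
    rw [hset]
    exact (SimpleGraph.induceUnivIso D.tree).connected_iff.2 D.isTree.connected

theorem setOf_hNodeIn_subset_image (τ : D.ι) :
    {x | ∃ s ∈ D.bag τ, T.HNodeIn x s} ⊆
      (fun p => T.faceNode p.1 p.2) '' (D.bag τ ×ˢ {A | A.Nonempty}) := by
  rintro (⟨i, f⟩ | ⟨⟨⟩⟩) ⟨s, hs, hx⟩
  · change T.FaceIn f s at hx
    obtain ⟨φ, rfl⟩ := hx
    exact ⟨(s, Finset.univ.map φ), ⟨hs, Finset.univ_nonempty.map⟩, faceNode_map s φ⟩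
  · exact hx.elim

theorem hasseBag_finite (τ : D.ι) : (hasseBag T D τ).Finite :=
  (Set.finite_singleton _).union
    ((((D.bag_finite τ).prod (Set.toFinite _)).image _).subset (setOf_hNodeIn_subset_image D τ))

theorem ncard_hasseBag_le (τ : D.ι) :
    (hasseBag T D τ).ncard ≤ (2 ^ (d + 1) - 1) * (D.bag τ).ncard + 1 := by
  have hprod : (D.bag τ ×ˢ {A : Finset (Fin (d + 1)) | A.Nonempty}).Finite :=
    (D.bag_finite τ).prod (Set.toFinite _)
  have hfaces : {x | ∃ s ∈ D.bag τ, T.HNodeIn x s}.ncard ≤ (2 ^ (d + 1) - 1) * (D.bag τ).ncard :=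
    calc _ ≤ ((fun p => T.faceNode p.1 p.2) '' (D.bag τ ×ˢ {A | A.Nonempty})).ncard :=
          Set.ncard_le_ncard (setOf_hNodeIn_subset_image D τ) (hprod.image _)
      _ ≤ (D.bag τ ×ˢ {A : Finset (Fin (d + 1)) | A.Nonempty}).ncard := Set.ncard_image_le hprod
      _ = (2 ^ (d + 1) - 1) * (D.bag τ).ncard := by
          rw [Set.ncard_prod, Finset.ncard_setOf_nonempty, Fintype.card_fin, mul_comm]
  exact (Set.ncard_insert_le _ _).trans (Nat.add_le_add_right hfaces 1)

variable (L : T.Labelling)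

noncomputable def hasseTreeDecomp : TreeDecomp (T.hasseAdj L) where
  ι := D.ι
  fin := D.fin
  tree := D.tree
  isTree := D.isTree
  bag := hasseBag T D
  bag_finite := hasseBag_finite D
  covers := exists_mem_hasseBag D
  covers_adj _ _ := exists_mem_hasseBag_of_hasseAdj D L
  subtree := induce_hasseBag_connected D

end Triangulation

theorem hasse_treeDecomp_general {d : ℕ} (T : Triangulation d) (L : T.Labelling)
    (w : ℕ) (D : TreeDecomp T.dualAdj) (hw : D.width = w) :
    (∃ D' : TreeDecomp (T.hasseAdj L), D'.width ≤ (2 ^ (d + 1) - 1) * (w + 1)) ∧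
    (∀ x : T.HNode, ∃ τ : D.ι, x ∈ hasseBag T D τ) ∧
    (∀ x y : T.HNode, T.hasseAdj L x y →
      ∃ τ : D.ι, x ∈ hasseBag T D τ ∧ y ∈ hasseBag T D τ) ∧
    (∀ x : T.HNode, (D.tree.induce {τ | x ∈ hasseBag T D τ}).Connected) ∧
    (∀ τ : D.ι, (hasseBag T D τ).ncard ≤ (2 ^ (d + 1) - 1) * (D.bag τ).ncard + 1) := by
  refine ⟨⟨Triangulation.hasseTreeDecomp D L, ?_⟩, Triangulation.exists_mem_hasseBag D,
    fun _ _ => Triangulation.exists_mem_hasseBag_of_hasseAdj D L,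
    Triangulation.induce_hasseBag_connected D, Triangulation.ncard_hasseBag_le D⟩
  refine TreeDecomp.width_le_of_ncard_bag_le _ fun τ => ?_
  calc (hasseBag T D τ).ncard ≤ (2 ^ (d + 1) - 1) * (D.bag τ).ncard + 1 :=
        Triangulation.ncard_hasseBag_le D τ
    _ ≤ (2 ^ (d + 1) - 1) * (w + 1) + 1 := by
        gcongr
        exact hw ▸ D.ncard_bag_le_width_add_one τ

/-- Let `T` be a `d`-dimensional triangulation of positive
size.  If the dual graph `D(T)` admits a tree decomposition of width `w`,
then the coloured Hasse diagram `H(T)` admits a tree decomposition of width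
at most `(2^(d+1) − 1)(w + 1)`.  Specifically, given a tree decomposition
`(T', {B_τ})` of `D(T)`, the bags `B'_τ` consisting of `∅` together with all
nodes of `H(T)` representing the simplices in `B_τ` and all of their faces
satisfy the three tree-decomposition conditions for `H(T)` on the same tree
`T'`, with `|B'_τ| ≤ (2^(d+1) − 1)·|B_τ| + 1` for every `τ`. -/
theorem hasse_treeDecomp {d : ℕ} (T : Triangulation d) (L : T.Labelling)
    (hn : 1 ≤ T.n) (w : ℕ) (D : TreeDecomp T.dualAdj) (hw : D.width = w) :
    (∃ D' : TreeDecomp (T.hasseAdj L), D'.width ≤ (2 ^ (d + 1) - 1) * (w + 1)) ∧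
    (∀ x : T.HNode, ∃ τ : D.ι, x ∈ hasseBag T D τ) ∧
    (∀ x y : T.HNode, T.hasseAdj L x y →
      ∃ τ : D.ι, x ∈ hasseBag T D τ ∧ y ∈ hasseBag T D τ) ∧
    (∀ x : T.HNode, (D.tree.induce {τ | x ∈ hasseBag T D τ}).Connected) ∧
    (∀ τ : D.ι, (hasseBag T D τ).ncard ≤ (2 ^ (d + 1) - 1) * (D.bag τ).ncard + 1) :=
  hasse_treeDecomp_general T L w D hw
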